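/- arXiv:1909.06081 — 9 statements merged into one kernel-verified Lean document; each statement's English description precedes it below -/
import Mathlib

section
/- For n ≥ 3, the set of all (n-1)-dimensional subspaces of F_q^n not containing a fixed 1-dimensional subspace P has size q^{n-1}, and every (n-2)-dimensional subspace of F_q^n is contained in at most q of its members. Consequently A_q(n,n-1,n-2;q) ≥ q^{n-1}. -/
open scoped Classical

def gaussBinom (q : ℕ) : ℕ → ℕ → ℕ
  | _, 0 => 1
  | 0, _ + 1 => 0
  | n + 1, k + 1 => gaussBinom q n k + q ^ (k + 1) * gaussBinom q n (k + 1)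

def IsPacking (F : Type) [Field F] [Fintype F] (n k t lam : ℕ)
    (S : Finset (Submodule F (Fin n → F))) : Prop :=
  (∀ U ∈ S, Module.finrank F U = k) ∧
    ∀ T : Submodule F (Fin n → F), Module.finrank F T = t →
      (S.filter fun U => T ≤ U).card ≤ lam

noncomputable def packingNumber (F : Type) [Field F] [Fintype F] (n k t lam : ℕ) : ℕ :=
  sSup {m | ∃ S : Finset (Submodule F (Fin n → F)), IsPacking F n k t lam S ∧ S.card = m}

def IsRPacking (F : Type) [Field F] [Fintype F] (n k t lam : ℕ)
    (S : Multiset (Submodule F (Fin n → F))) : Prop :=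
  (∀ U ∈ S, Module.finrank F U = k) ∧
    ∀ T : Submodule F (Fin n → F), Module.finrank F T = t →
      (S.countP fun U => T ≤ U) ≤ lam

noncomputable def rPackingNumber (F : Type) [Field F] [Fintype F] (n k t lam : ℕ) : ℕ :=
  sSup {m | ∃ S : Multiset (Submodule F (Fin n → F)), IsRPacking F n k t lam S ∧ Multiset.card S = m}

open Module LinearMap

section Helpers

variable {K V : Type*} [Field K] [AddCommGroup V] [Module K V] [FiniteDimensional K V]

lemma exists_ker_eq (U : Submodule K V) (hU : finrank K U + 1 = finrank K V)
    (p : V) (hp : p ∉ U) :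
    ∃ φ : Module.Dual K V, LinearMap.ker φ = U ∧ φ p = 1 := by
  have hq1 : finrank K (V ⧸ U) = 1 := by
    have := U.finrank_quotient_add_finrank
    omega
  have hfp : U.mkQ p ≠ 0 := by
    simpa [Submodule.Quotient.mk_eq_zero] using hp
  let b := FiniteDimensional.basisSingleton (Fin 1) hq1 (U.mkQ p) hfp
  refine ⟨(b.coord 0).comp U.mkQ, ?_, ?_⟩
  · have hle : U ≤ LinearMap.ker ((b.coord 0).comp U.mkQ) := by
      intro x hx
      simp [LinearMap.mem_ker, (Submodule.Quotient.mk_eq_zero _).2 hx]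
    have hfr : finrank K (LinearMap.ker ((b.coord 0).comp U.mkQ)) ≤ finrank K U := by
      have hrange : LinearMap.range ((b.coord 0).comp U.mkQ) = ⊤ := by
        rw [LinearMap.range_eq_top]
        intro c
        refine ⟨c • p, ?_⟩
        have h1 : (b.coord 0) (U.mkQ p) = 1 := by
          have : b 0 = U.mkQ p := FiniteDimensional.basisSingleton_apply _ _ _ _ _
          rw [Basis.coord_apply, ← this, Basis.repr_self]
          simp
        show (b.coord 0) (U.mkQ (c • p)) = c
        rw [map_smul, map_smul, h1, smul_eq_mul, mul_one]
      have h2 := LinearMap.finrank_range_add_finrank_ker ((b.coord 0).comp U.mkQ)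
      rw [hrange, finrank_top, Module.finrank_self] at h2
      omega
    exact (Submodule.eq_of_le_of_finrank_le hle hfr).symm
  · have h1 : (b.coord 0) (U.mkQ p) = 1 := by
      have : b 0 = U.mkQ p := FiniteDimensional.basisSingleton_apply _ _ _ _ _
      rw [Basis.coord_apply, ← this, Basis.repr_self]
      simp
    simpa using h1

lemma sup_span_finrank (T : Submodule K V) (p : V) (hp0 : p ≠ 0) (hpT : p ∉ T) :
    finrank K (T ⊔ Submodule.span K {p} : Submodule K V) = finrank K T + 1 := by
  have hdis : T ⊓ Submodule.span K {p} = ⊥ := by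
    rw [eq_bot_iff]
    rintro x ⟨hxT, hxS⟩
    obtain ⟨c, rfl⟩ := Submodule.mem_span_singleton.1 hxS
    rcases eq_or_ne c 0 with rfl | hc
    · simp
    · exact absurd (by simpa [smul_smul, inv_mul_cancel₀ hc] using T.smul_mem c⁻¹ hxT : p ∈ T) hpT
  have := Submodule.finrank_sup_add_finrank_inf_eq T (Submodule.span K {p})
  rw [hdis, finrank_bot, finrank_span_singleton hp0] at this
  omega

lemma unique_dual (U : Submodule K V) (hU : finrank K U + 1 = finrank K V)
    (p : V) (hp : p ∉ U) (φ ψ : Module.Dual K V)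
    (hφ : LinearMap.ker φ = U) (hψ : LinearMap.ker ψ = U) (hpe : φ p = ψ p) : φ = ψ := by
  have hp0 : p ≠ 0 := fun h => hp (h ▸ U.zero_mem)
  have htop : U ⊔ Submodule.span K {p} = ⊤ := by
    apply Submodule.eq_top_of_finrank_eq
    rw [sup_span_finrank U p hp0 hp]
    omega
  ext x
  have hx : x ∈ U ⊔ Submodule.span K {p} := htop ▸ Submodule.mem_top
  obtain ⟨u, hu, v, hv, rfl⟩ := Submodule.mem_sup.1 hx
  obtain ⟨c, rfl⟩ := Submodule.mem_span_singleton.1 hv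
  have hφu : φ u = 0 := by rw [← LinearMap.mem_ker, hφ]; exact hu
  have hψu : ψ u = 0 := by rw [← LinearMap.mem_ker, hψ]; exact hu
  simp [map_add, map_smul, hφu, hψu, hpe]

end Helpers

theorem stmt3 (q n : ℕ) (F : Type) [Field F] [Fintype F] (hq : Fintype.card F = q)
    (hn : 3 ≤ n) (P : Submodule F (Fin n → F)) (hP : Module.finrank F P = 1) :
    Nat.card {U : Submodule F (Fin n → F) // Module.finrank F U = n - 1 ∧ ¬ P ≤ U} =
        q ^ (n - 1) ∧
      (∀ T : Submodule F (Fin n → F), Module.finrank F T = n - 2 →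
        Nat.card {U : Submodule F (Fin n → F) //
          (Module.finrank F U = n - 1 ∧ ¬ P ≤ U) ∧ T ≤ U} ≤ q) ∧
      q ^ (n - 1) ≤ packingNumber F n (n - 1) (n - 2) q := by
  classical
  have hV : finrank F (Fin n → F) = n := Module.finrank_fin_fun F
  -- a generator of P
  have hPbot : P ≠ ⊥ := by
    intro h
    rw [h] at hP
    simp at hP
  obtain ⟨p, hpP, hp0⟩ := Submodule.exists_mem_ne_zero_of_ne_bot hPbot
  have hPs : P = Submodule.span F {p} := by
    refine (Submodule.eq_of_le_of_finrank_le ?_ ?_).symm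
    · rwa [Submodule.span_singleton_le_iff_mem]
    · rw [hP, finrank_span_singleton hp0]
  have hPle : ∀ U : Submodule F (Fin n → F), (P ≤ U ↔ p ∈ U) := fun U => by
    rw [hPs, Submodule.span_singleton_le_iff_mem]
  -- chosen dual functionals for hyperplanes avoiding p
  choose Φ hΦk hΦp using
    fun (U : {U : Submodule F (Fin n → F) // finrank F U = n - 1 ∧ p ∉ U}) =>
      exists_ker_eq U.1 (by rw [U.2.1, hV]; omega) p U.2.2
  have hker : ∀ φ : Module.Dual F (Fin n → F), φ p = 1 →
      finrank F (LinearMap.ker φ) = n - 1 ∧ p ∉ LinearMap.ker φ := by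
    intro φ hφ
    have hpk : p ∉ LinearMap.ker φ := by simp [LinearMap.mem_ker, hφ]
    refine ⟨?_, hpk⟩
    have hrange : LinearMap.range φ = ⊤ := by
      rw [LinearMap.range_eq_top]
      intro c
      exact ⟨c • p, by simp [hφ]⟩
    have h2 := LinearMap.finrank_range_add_finrank_ker φ
    rw [hrange, finrank_top, Module.finrank_self, hV] at h2
    omega
  let E : {U : Submodule F (Fin n → F) // finrank F U = n - 1 ∧ p ∉ U} ≃
      {φ : Module.Dual F (Fin n → F) // φ p = 1} :=
  { toFun := fun U => ⟨Φ U, hΦp U⟩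
    invFun := fun φ => ⟨LinearMap.ker φ.1, hker φ.1 φ.2⟩
    left_inv := fun U => Subtype.ext (hΦk U)
    right_inv := fun φ => by
      apply Subtype.ext
      exact unique_dual (LinearMap.ker φ.1) (by rw [(hker φ.1 φ.2).1, hV]; omega) p
        (hker φ.1 φ.2).2 _ φ.1 (hΦk ⟨LinearMap.ker φ.1, hker φ.1 φ.2⟩) rfl
        (by rw [hΦp, φ.2]) }
  -- a functional with value 1 at p
  obtain ⟨φ₁, hφ₁⟩ : ∃ φ : Module.Dual F (Fin n → F), φ p ≠ 0 := by
    by_contra h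
    push_neg at h
    exact hp0 ((Module.forall_dual_apply_eq_zero_iff F p).1 h)
  set φ₀ : Module.Dual F (Fin n → F) := (φ₁ p)⁻¹ • φ₁ with hφ₀def
  have hφ₀ : φ₀ p = 1 := by
    simp [hφ₀def, inv_mul_cancel₀ hφ₁]
  -- evaluation at p
  set ev : Module.Dual F (Fin n → F) →ₗ[F] F := Module.Dual.eval F (Fin n → F) p with hevdef
  have hev : ∀ φ : Module.Dual F (Fin n → F), ev φ = φ p := fun φ => rfl
  have hrank_ev : finrank F (LinearMap.ker ev) = n - 1 := by
    have hr : LinearMap.range ev = ⊤ := by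
      rw [LinearMap.range_eq_top]
      intro c
      exact ⟨c • φ₀, by rw [hev, LinearMap.smul_apply, hφ₀, smul_eq_mul, mul_one]⟩
    have h2 := LinearMap.finrank_range_add_finrank_ker ev
    rw [hr, finrank_top, Module.finrank_self, Subspace.dual_finrank_eq, hV] at h2
    omega
  let e1 : {φ : Module.Dual F (Fin n → F) // φ p = 1} ≃ LinearMap.ker ev :=
  { toFun := fun φ => ⟨φ.1 - φ₀, by
      rw [LinearMap.mem_ker, hev, LinearMap.sub_apply, φ.2, hφ₀, sub_self]⟩
    invFun := fun ψ => ⟨ψ.1 + φ₀, by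
      have h := ψ.2
      rw [LinearMap.mem_ker, hev] at h
      rw [LinearMap.add_apply, h, hφ₀, zero_add]⟩
    left_inv := fun φ => Subtype.ext (by simp)
    right_inv := fun ψ => Subtype.ext (by simp) }
  haveI : Finite (Module.Dual F (Fin n → F)) :=
    Finite.of_injective (fun φ => (φ : (Fin n → F) → F)) DFunLike.coe_injective
  have cardW : ∀ W : Submodule F (Module.Dual F (Fin n → F)), Nat.card W = q ^ finrank F W := by
    intro W
    haveI : Fintype W := Fintype.ofFinite W
    rw [Nat.card_eq_fintype_card, card_eq_pow_finrank (K := F), hq]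
  have count1 : Nat.card {φ : Module.Dual F (Fin n → F) // φ p = 1} = q ^ (n - 1) := by
    rw [Nat.card_congr e1, cardW, hrank_ev]
  have part1 : Nat.card {U : Submodule F (Fin n → F) //
      Module.finrank F U = n - 1 ∧ ¬ P ≤ U} = q ^ (n - 1) := by
    rw [Nat.card_congr (Equiv.subtypeEquivRight
      (fun U => and_congr_right fun _ => not_congr (hPle U))), Nat.card_congr E, count1]
  have part2 : ∀ T : Submodule F (Fin n → F), Module.finrank F T = n - 2 →
      Nat.card {U : Submodule F (Fin n → F) //
        (Module.finrank F U = n - 1 ∧ ¬ P ≤ U) ∧ T ≤ U} ≤ q := by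
    intro T hT
    let Econv : {U : Submodule F (Fin n → F) //
        (Module.finrank F U = n - 1 ∧ ¬ P ≤ U) ∧ T ≤ U} ≃
        {φ : Module.Dual F (Fin n → F) // φ p = 1 ∧ T ≤ LinearMap.ker φ} :=
    { toFun := fun U =>
        ⟨Φ ⟨U.1, U.2.1.1, fun h => U.2.1.2 ((hPle U.1).2 h)⟩,
          hΦp _, by rw [hΦk]; exact U.2.2⟩
      invFun := fun φ => ⟨LinearMap.ker φ.1,
        ⟨⟨(hker φ.1 φ.2.1).1, fun h => (hker φ.1 φ.2.1).2 ((hPle _).1 h)⟩, φ.2.2⟩⟩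
      left_inv := fun U => Subtype.ext (hΦk _)
      right_inv := fun φ => by
        apply Subtype.ext
        exact unique_dual (LinearMap.ker φ.1) (by rw [(hker φ.1 φ.2.1).1, hV]; omega) p
          (hker φ.1 φ.2.1).2 _ φ.1 (hΦk _) rfl (by rw [hΦp, φ.2.1]) }
    rw [Nat.card_congr Econv]
    by_cases hE : ∃ φ₂ : Module.Dual F (Fin n → F), φ₂ p = 1 ∧ T ≤ LinearMap.ker φ₂
    · obtain ⟨φ₂, hφ₂p, hφ₂T⟩ := hE
      have hpT : p ∉ T := by
        intro h
        have h0 : φ₂ p = 0 := hφ₂T h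
        rw [hφ₂p] at h0
        exact one_ne_zero h0
      set W : Submodule F (Module.Dual F (Fin n → F)) :=
        (T ⊔ Submodule.span F {p}).dualAnnihilator with hWdef
      have hmemW : ∀ ψ : Module.Dual F (Fin n → F),
          ψ ∈ W ↔ (ψ p = 0 ∧ T ≤ LinearMap.ker ψ) := by
        intro ψ
        rw [hWdef, Submodule.mem_dualAnnihilator]
        constructor
        · intro h
          exact ⟨h p (Submodule.mem_sup_right (Submodule.mem_span_singleton_self p)),
            fun t ht => h t (Submodule.mem_sup_left ht)⟩
        · rintro ⟨h1, h2⟩ w hw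
          have hle : T ⊔ Submodule.span F {p} ≤ LinearMap.ker ψ :=
            sup_le h2 (by rwa [Submodule.span_singleton_le_iff_mem, LinearMap.mem_ker])
          exact hle hw
      let e2 : {φ : Module.Dual F (Fin n → F) // φ p = 1 ∧ T ≤ LinearMap.ker φ} ≃ W :=
      { toFun := fun φ => ⟨φ.1 - φ₂, (hmemW _).2 ⟨by
          rw [LinearMap.sub_apply, φ.2.1, hφ₂p, sub_self], by
          intro t ht
          have h1 : φ.1 t = 0 := φ.2.2 ht
          have h2 : φ₂ t = 0 := hφ₂T ht
          rw [LinearMap.mem_ker, LinearMap.sub_apply, h1, h2, sub_zero]⟩⟩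
        invFun := fun ψ => ⟨ψ.1 + φ₂, by
          have h := (hmemW ψ.1).1 ψ.2
          refine ⟨by rw [LinearMap.add_apply, h.1, hφ₂p, zero_add], ?_⟩
          intro t ht
          have h1 : ψ.1 t = 0 := h.2 ht
          have h2 : φ₂ t = 0 := hφ₂T ht
          rw [LinearMap.mem_ker, LinearMap.add_apply, h1, h2, add_zero]⟩
        left_inv := fun φ => Subtype.ext (by simp)
        right_inv := fun ψ => Subtype.ext (by simp) }
      rw [Nat.card_congr e2, cardW]
      have hfrsup : finrank F (T ⊔ Submodule.span F {p} : Submodule F (Fin n → F)) = n - 1 := by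
        rw [sup_span_finrank T p hp0 hpT, hT]
        omega
      have hfrW : finrank F W = 1 := by
        have h1 := (T ⊔ Submodule.span F {p}).finrank_quotient_add_finrank
        have h2 : finrank F ((Fin n → F) ⧸ (T ⊔ Submodule.span F {p})) = finrank F W :=
          (Subspace.quotEquivAnnihilator (T ⊔ Submodule.span F {p})).finrank_eq
        rw [hV, hfrsup] at h1
        rw [h2] at h1
        omega
      rw [hfrW, pow_one]
    · haveI : IsEmpty {φ : Module.Dual F (Fin n → F) // φ p = 1 ∧ T ≤ LinearMap.ker φ} :=
        ⟨fun φ => hE ⟨φ.1, φ.2⟩⟩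
      rw [Nat.card_of_isEmpty]
      exact Nat.zero_le q
  refine ⟨part1, part2, ?_⟩
  -- the packing
  haveI : Finite (Submodule F (Fin n → F)) :=
    Finite.of_injective (SetLike.coe) SetLike.coe_injective
  haveI : Fintype (Submodule F (Fin n → F)) := Fintype.ofFinite _
  haveI : Fintype {U : Submodule F (Fin n → F) |
      Module.finrank F U = n - 1 ∧ ¬ P ≤ U} := Fintype.ofFinite _
  set S : Finset (Submodule F (Fin n → F)) :=
    {U : Submodule F (Fin n → F) | Module.finrank F U = n - 1 ∧ ¬ P ≤ U}.toFinset with hSdef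
  have hmemS : ∀ U : Submodule F (Fin n → F),
      U ∈ S ↔ (Module.finrank F U = n - 1 ∧ ¬ P ≤ U) := by
    intro U
    rw [hSdef, Set.mem_toFinset]
    rfl
  have hcardS : S.card = q ^ (n - 1) := by
    rw [← part1, Nat.card_eq_fintype_card, ← Fintype.card_coe]
    exact (Fintype.card_congr (Equiv.subtypeEquivRight fun U => hmemS U)).symm ▸ rfl
  have hpack : IsPacking F n (n - 1) (n - 2) q S := by
    constructor
    · exact fun U hU => ((hmemS U).1 hU).1
    · intro T hT
      have hcf : (S.filter fun U => T ≤ U).card = Nat.card {U : Submodule F (Fin n → F) //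
          (Module.finrank F U = n - 1 ∧ ¬ P ≤ U) ∧ T ≤ U} := by
        rw [Nat.card_eq_fintype_card, ← Fintype.card_coe]
        apply Fintype.card_congr
        apply Equiv.subtypeEquivRight
        intro U
        rw [Finset.mem_filter, hmemS U]
      rw [hcf]
      exact part2 T hT
  have hbdd : BddAbove {m | ∃ S' : Finset (Submodule F (Fin n → F)),
      IsPacking F n (n - 1) (n - 2) q S' ∧ S'.card = m} := by
    refine ⟨Fintype.card (Submodule F (Fin n → F)), ?_⟩
    rintro m ⟨S', _, rfl⟩
    exact Finset.card_le_univ S'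
  rw [← hcardS]
  exact le_csSup hbdd ⟨S, hpack, rfl⟩
end

section
/- For integers 1 ≤ t ≤ k < n, let F be a fixed (n-k)-dimensional subspace of F_q^n. The set of all k-dimensional subspaces of F_q^n intersecting F trivially has size q^{(n-k)k}, and every t-dimensional subspace of F_q^n is contained in at most q^{(n-k)(k-t)} of its members. Hence A_q(n,k,t;q^{(n-k)(k-t)}) ≥ q^{(n-k)k}. -/
open scoped Classical

/-! The complements of `Fs` correspond, via their kernels, to the projections onto `Fs`; these
form a coset of the maps vanishing on `Fs`, a space of dimension `k (n - k)`. The projection along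
a complement containing `T` is determined up to a map vanishing on `Fs ⊔ T`, which has dimension
`n - k + t` once one such complement exists, leaving `q ^ ((k - t) (n - k))` choices. -/

section Complements

open Module Submodule LinearMap

variable {K V W : Type} [Field K] [AddCommGroup V] [Module K V] [FiniteDimensional K V]
  [AddCommGroup W] [Module K W] [FiniteDimensional K W]

theorem finrank_ker_lcomp_subtype (P : Submodule K V) :
    finrank K (ker (lcomp K W P.subtype)) = (finrank K V - finrank K P) * finrank K W := by
  have hsurj : range (lcomp K W P.subtype) = ⊤ :=
    range_eq_top.2 fun g => (LinearMap.exists_extend g).imp fun _ h => h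
  have := finrank_range_add_finrank_ker (lcomp K W P.subtype)
  rw [hsurj, finrank_top, finrank_linearMap, finrank_linearMap] at this
  rw [Nat.sub_mul]
  omega

theorem natCard_linearMap_eqOn (P : Submodule K V) (f₀ : V →ₗ[K] W) :
    Nat.card {f : V →ₗ[K] W // P ≤ ker (f - f₀)} =
      Nat.card K ^ ((finrank K V - finrank K P) * finrank K W) := by
  let e : {f : V →ₗ[K] W // P ≤ ker (f - f₀)} ≃ ker (lcomp K W P.subtype) :=
    { toFun f := ⟨f.1 - f₀, by ext x; simpa using f.2 x.2⟩
      invFun g := ⟨g.1 + f₀, fun x hx => by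
        rw [mem_ker, add_sub_cancel_right]; exact LinearMap.congr_fun (mem_ker.1 g.2) ⟨x, hx⟩⟩
      left_inv f := by simp
      right_inv g := by simp }
  rw [Nat.card_congr e, natCard_eq_pow_finrank (K := K), finrank_ker_lcomp_subtype]

theorem natCard_isCompl (p : Submodule K V) :
    Nat.card {q // IsCompl p q} = Nat.card K ^ ((finrank K V - finrank K p) * finrank K p) := by
  obtain ⟨q₀, hq₀⟩ := p.exists_isCompl
  have hproj : ∀ f : V →ₗ[K] p, (∀ x : p, f x = x) ↔ p ≤ ker (f - p.projectionOnto q₀ hq₀) :=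
    fun f => ⟨fun hf x hx => by simp [hf ⟨x, hx⟩, projectionOnto_apply_of_mem_left hq₀ hx],
      fun hf x => by simpa [sub_eq_zero] using hf x.2⟩
  rw [Nat.card_congr (p.isComplEquivProj.trans (Equiv.subtypeEquivRight hproj)),
    natCard_linearMap_eqOn]

theorem natCard_isCompl_le_of_le [Finite K] (p T : Submodule K V) :
    Nat.card {q // IsCompl p q ∧ T ≤ q} ≤
      Nat.card K ^ ((finrank K V - finrank K p - finrank K T) * finrank K p) := by
  rcases isEmpty_or_nonempty {q // IsCompl p q ∧ T ≤ q} with _ | ⟨q₀, hq₀, hTq₀⟩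
  · simp
  have hagree : ∀ q : {q // IsCompl p q ∧ T ≤ q},
      p ⊔ T ≤ ker (p.projectionOnto q.1 q.2.1 - p.projectionOnto q₀ hq₀) := by
    rintro ⟨q, hq, hTq⟩
    refine sup_le (fun x hx => ?_) (fun x hx => ?_)
    · simp [projectionOnto_apply_of_mem_left hq hx, projectionOnto_apply_of_mem_left hq₀ hx]
    · simp [projectionOnto_apply_of_mem_right hq (hTq hx),
        projectionOnto_apply_of_mem_right hq₀ (hTq₀ hx)]
  have hinj : Function.Injective fun q : {q // IsCompl p q ∧ T ≤ q} =>
      (⟨_, hagree q⟩ : {f : V →ₗ[K] p // p ⊔ T ≤ ker (f - p.projectionOnto q₀ hq₀)}) := by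
    intro q q' h
    have := congrArg ker (congrArg Subtype.val h)
    simp only [ker_projectionOnto] at this
    exact Subtype.ext this
  have hdisj : p ⊓ T = ⊥ := eq_bot_iff.2 fun x hx =>
    (disjoint_iff.1 hq₀.disjoint) ▸ ⟨hx.1, hTq₀ hx.2⟩
  have hrank : finrank K ↥(p ⊔ T) = finrank K p + finrank K T := by
    have := finrank_sup_add_finrank_inf_eq p T
    rwa [hdisj, finrank_bot, add_zero] at this
  have : Finite (V →ₗ[K] p) := Module.finite_of_finite K
  calc _ ≤ _ := Nat.card_le_card_of_injective _ hinj
    _ = _ := by rw [natCard_linearMap_eqOn, hrank, Nat.sub_sub]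

theorem isCompl_iff_finrank_eq_and_inf_eq_bot {p U : Submodule K V} {k : ℕ}
    (hp : finrank K p + k = finrank K V) :
    IsCompl p U ↔ finrank K U = k ∧ U ⊓ p = ⊥ := by
  refine ⟨fun h => ⟨by have := finrank_add_eq_of_isCompl h; omega,
    inf_comm p U ▸ disjoint_iff.1 h.disjoint⟩, fun ⟨hU, hUp⟩ => ?_⟩
  rw [inf_comm] at hUp
  refine ⟨disjoint_iff.2 hUp, codisjoint_iff.2 (eq_top_of_finrank_eq ?_)⟩
  have := finrank_sup_add_finrank_inf_eq p U
  rw [hUp, finrank_bot] at this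
  omega

end Complements

theorem natCard_le_packingNumber {F : Type} [Field F] [Fintype F] {n k t lam : ℕ}
    (P : Submodule F (Fin n → F) → Prop) (hP : ∀ U, P U → Module.finrank F U = k)
    (hlam : ∀ T : Submodule F (Fin n → F), Module.finrank F T = t →
      Nat.card {U // P U ∧ T ≤ U} ≤ lam) :
    Nat.card {U // P U} ≤ packingNumber F n k t lam := by
  have hpack : IsPacking F n k t lam (Finset.univ.filter P) := by
    refine ⟨fun U hU => hP U (Finset.mem_filter.1 hU).2, fun T hT => ?_⟩
    rw [Finset.filter_filter, ← Fintype.card_subtype, ← Nat.card_eq_fintype_card]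
    exact hlam T hT
  have hbdd : BddAbove {m | ∃ S : Finset (Submodule F (Fin n → F)),
      IsPacking F n k t lam S ∧ S.card = m} :=
    ⟨Fintype.card (Submodule F (Fin n → F)), fun _ ⟨S, _, hS⟩ => hS ▸ S.card_le_univ⟩
  refine le_csSup hbdd ⟨_, hpack, ?_⟩
  rw [Nat.card_eq_fintype_card, Fintype.card_subtype]

open Module in
theorem stmt4_general (q n k t : ℕ) (F : Type) [Field F] [Fintype F] (hq : Fintype.card F = q)
    (hkn : k < n)
    (Fs : Submodule F (Fin n → F)) (hFs : Module.finrank F Fs = n - k) :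
    Nat.card {U : Submodule F (Fin n → F) // Module.finrank F U = k ∧ U ⊓ Fs = ⊥} =
        q ^ ((n - k) * k) ∧
      (∀ T : Submodule F (Fin n → F), Module.finrank F T = t →
        Nat.card {U : Submodule F (Fin n → F) //
          (Module.finrank F U = k ∧ U ⊓ Fs = ⊥) ∧ T ≤ U} ≤ q ^ ((n - k) * (k - t))) ∧
      q ^ ((n - k) * k) ≤ packingNumber F n k t (q ^ ((n - k) * (k - t))) := by
  have hV : finrank F (Fin n → F) = n := finrank_fin_fun F
  have hq' : Nat.card F = q := Nat.card_eq_fintype_card.trans hq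
  have hcompl (U : Submodule F (Fin n → F)) : IsCompl Fs U ↔ finrank F U = k ∧ U ⊓ Fs = ⊥ :=
    isCompl_iff_finrank_eq_and_inf_eq_bot (by omega)
  have hcard : Nat.card {U : Submodule F (Fin n → F) // finrank F U = k ∧ U ⊓ Fs = ⊥} =
      q ^ ((n - k) * k) := by
    rw [← Nat.card_congr (Equiv.subtypeEquivRight hcompl), natCard_isCompl, hq', hV, hFs,
      Nat.sub_sub_self hkn.le, Nat.mul_comm]
  have hcontain (T : Submodule F (Fin n → F)) (hT : finrank F T = t) :
      Nat.card {U : Submodule F (Fin n → F) // (finrank F U = k ∧ U ⊓ Fs = ⊥) ∧ T ≤ U} ≤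
        q ^ ((n - k) * (k - t)) := by
    rw [← Nat.card_congr (Equiv.subtypeEquivRight fun U => and_congr_left' (hcompl U))]
    refine (natCard_isCompl_le_of_le Fs T).trans_eq ?_
    rw [hq', hV, hFs, hT, Nat.sub_sub_self hkn.le, Nat.mul_comm]
  exact ⟨hcard, hcontain, hcard ▸ natCard_le_packingNumber _ (fun _ h => h.1) hcontain⟩

theorem stmt4 (q n k t : ℕ) (F : Type) [Field F] [Fintype F] (hq : Fintype.card F = q)
    (ht : 1 ≤ t) (htk : t ≤ k) (hkn : k < n)
    (Fs : Submodule F (Fin n → F)) (hFs : Module.finrank F Fs = n - k) :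
    Nat.card {U : Submodule F (Fin n → F) // Module.finrank F U = k ∧ U ⊓ Fs = ⊥} =
        q ^ ((n - k) * k) ∧
      (∀ T : Submodule F (Fin n → F), Module.finrank F T = t →
        Nat.card {U : Submodule F (Fin n → F) //
          (Module.finrank F U = k ∧ U ⊓ Fs = ⊥) ∧ T ≤ U} ≤ q ^ ((n - k) * (k - t))) ∧
      q ^ ((n - k) * k) ≤ packingNumber F n k t (q ^ ((n - k) * (k - t))) :=
  stmt4_general q n k t F hq hkn Fs hFs
end

section
/- For positive integers 2 ≤ t ≤ k ≤ n and λ ≥ 1, the maximum size of a t-(n,k,λ)_q subspace packing satisfies A_q(n,k,t;λ) ≤ floor( ((q^n - 1)/(q^k - 1)) · A_q(n-1,k-1,t-1;λ) ). -/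
open scoped Classical

private lemma pk_bdd (F : Type) [Field F] [Fintype F] (n k t lam : ℕ) :
    BddAbove {m | ∃ S : Finset (Submodule F (Fin n → F)), IsPacking F n k t lam S ∧ S.card = m} := by
  have : Fintype (Submodule F (Fin n → F)) := Fintype.ofFinite _
  refine ⟨Fintype.card (Submodule F (Fin n → F)), ?_⟩
  rintro m ⟨S, _, rfl⟩
  exact Finset.card_le_univ S

private lemma pk_ne (F : Type) [Field F] [Fintype F] (n k t lam : ℕ) :
    Set.Nonempty {m | ∃ S : Finset (Submodule F (Fin n → F)), IsPacking F n k t lam S ∧ S.card = m} :=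
  ⟨0, ∅, ⟨fun U hU => absurd hU (Finset.notMem_empty U), fun T _ => by simp⟩, rfl⟩

private lemma card_mod (F V : Type) [Field F] [Fintype F] [AddCommGroup V] [Module F V]
    [FiniteDimensional F V] [Fintype V] :
    Fintype.card V = Fintype.card F ^ Module.finrank F V :=
  (Module.card_fintype (Module.finBasis F V)).trans (by simp)

private lemma map_symm_map {F M N : Type} [Field F] [AddCommGroup M] [Module F M]
    [AddCommGroup N] [Module F N] (e : M ≃ₗ[F] N) (X : Submodule F M) :
    (X.map (e : M →ₗ[F] N)).map (e.symm : N →ₗ[F] M) = X := by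
  ext x
  simp [Submodule.mem_map]

set_option synthInstance.maxHeartbeats 1000000 in
private lemma point_bound (n k t lam : ℕ) (F : Type) [Field F] [Fintype F]
    (ht : 1 ≤ t) (htk : t ≤ k) (hkn : k ≤ n)
    (S : Finset (Submodule F (Fin n → F))) (hS : IsPacking F n k t lam S)
    (v : Fin n → F) (hv : v ≠ 0) :
    (S.filter fun U => v ∈ U).card ≤ packingNumber F (n-1) (k-1) (t-1) lam := by
  set P : Submodule F (Fin n → F) := Submodule.span F {v} with hPdef
  have hP1 : Module.finrank F P = 1 := finrank_span_singleton hv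
  have hVq : Module.finrank F ((Fin n → F) ⧸ P) = n - 1 := by
    have h := Submodule.finrank_quotient_add_finrank P
    rw [Module.finrank_fin_fun, hP1] at h
    omega
  let e : ((Fin n → F) ⧸ P) ≃ₗ[F] (Fin (n-1) → F) :=
    LinearEquiv.ofFinrankEq _ _ (by rw [hVq, Module.finrank_fin_fun])
  set φ : Submodule F (Fin n → F) → Submodule F (Fin (n-1) → F) :=
    fun U => (U.map P.mkQ).map (e : _ →ₗ[F] _) with hφdef
  have hrank : ∀ U : Submodule F (Fin n → F), P ≤ U →
      Module.finrank F (U.map P.mkQ) + 1 = Module.finrank F U := by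
    intro U hPU
    have h1 : (U.map P.mkQ) = LinearMap.range (P.mkQ.comp U.subtype) := by
      rw [LinearMap.range_comp, Submodule.range_subtype]
    have h2 := LinearMap.finrank_range_add_finrank_ker (P.mkQ.comp U.subtype)
    have h3 : LinearMap.ker (P.mkQ.comp U.subtype) = Submodule.comap U.subtype P := by
      rw [LinearMap.ker_comp, Submodule.ker_mkQ]
    have h4 : Module.finrank F (Submodule.comap U.subtype P) = 1 := by
      rw [(Submodule.comapSubtypeEquivOfLe hPU).finrank_eq, hP1]
    rw [h3, h4, ← h1] at h2
    exact h2
  have hmemP : ∀ U : Submodule F (Fin n → F), v ∈ U → P ≤ U := fun U hU =>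
    (Submodule.span_singleton_le_iff_mem v U).2 hU
  have hinj : Set.InjOn φ (S.filter fun U => v ∈ U) := by
    intro U hU U' hU' h
    simp only [Finset.coe_filter, Set.mem_setOf_eq] at hU hU'
    have hPU : P ≤ U := hmemP U hU.2
    have hPU' : P ≤ U' := hmemP U' hU'.2
    have h2 : U.map P.mkQ = U'.map P.mkQ :=
      Submodule.map_injective_of_injective e.injective h
    have h3 := congrArg (Submodule.comap P.mkQ) h2
    rwa [Submodule.comap_map_eq, Submodule.comap_map_eq, Submodule.ker_mkQ,
      sup_eq_left.2 hPU, sup_eq_left.2 hPU'] at h3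
  set S' : Finset (Submodule F (Fin (n-1) → F)) := (S.filter fun U => v ∈ U).image φ with hS'def
  have hS'pack : IsPacking F (n-1) (k-1) (t-1) lam S' := by
    constructor
    · intro W hW
      rw [hS'def, Finset.mem_image] at hW
      obtain ⟨U, hU, rfl⟩ := hW
      rw [Finset.mem_filter] at hU
      have hUk : Module.finrank F U = k := hS.1 U hU.1
      have := hrank U (hmemP U hU.2)
      rw [hφdef]
      rw [LinearEquiv.finrank_map_eq e (U.map P.mkQ)]
      omega
    · intro T' hT'
      set T₁ : Submodule F ((Fin n → F) ⧸ P) := T'.map (e.symm : _ →ₗ[F] _) with hT₁def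
      set T : Submodule F (Fin n → F) := T₁.comap P.mkQ with hTdef
      have hT1rank : Module.finrank F T₁ = t - 1 :=
        (LinearEquiv.finrank_map_eq e.symm T').trans hT'
      have hPT : P ≤ T := by
        intro x hx
        have hx0 : P.mkQ x = 0 := by
          rw [Submodule.mkQ_apply, Submodule.Quotient.mk_eq_zero]
          exact hx
        show x ∈ Submodule.comap P.mkQ T₁
        rw [Submodule.mem_comap, hx0]
        exact T₁.zero_mem
      have hmapT : T.map P.mkQ = T₁ := by
        rw [hTdef, Submodule.map_comap_eq, Submodule.range_mkQ, top_inf_eq]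
      have hTrank : Module.finrank F T = t := by
        have := hrank T hPT
        rw [hmapT, hT1rank] at this
        omega
      have hsub : ((S.filter fun U => v ∈ U).filter fun U => T' ≤ φ U) ⊆
          S.filter fun U => T ≤ U := by
        intro U hU
        rw [Finset.mem_filter, Finset.mem_filter] at hU
        obtain ⟨⟨hUS, hvU⟩, hle⟩ := hU
        rw [Finset.mem_filter]
        refine ⟨hUS, ?_⟩
        have hPU : P ≤ U := hmemP U hvU
        have h1 : T₁ ≤ U.map P.mkQ := by
          have h : (T'.map (e.symm : (Fin (n-1) → F) →ₗ[F] ((Fin n → F) ⧸ P))) ≤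
              ((φ U).map (e.symm : (Fin (n-1) → F) →ₗ[F] ((Fin n → F) ⧸ P))) :=
            Submodule.map_mono hle
          rw [hφdef] at h
          simp only at h
          rwa [map_symm_map] at h
        have h2 := Submodule.comap_mono (f := P.mkQ) h1
        rwa [Submodule.comap_map_eq, Submodule.ker_mkQ, sup_eq_left.2 hPU, ← hTdef] at h2
      calc (S'.filter fun W => T' ≤ W).card
          ≤ ((S.filter fun U => v ∈ U).filter fun U => T' ≤ φ U).card := by
            rw [hS'def, Finset.filter_image]
            exact Finset.card_image_le
        _ ≤ (S.filter fun U => T ≤ U).card := Finset.card_le_card hsub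
        _ ≤ lam := hS.2 T hTrank
  calc (S.filter fun U => v ∈ U).card = S'.card := (Finset.card_image_of_injOn hinj).symm
    _ ≤ packingNumber F (n-1) (k-1) (t-1) lam :=
        le_csSup (pk_bdd F (n-1) (k-1) (t-1) lam) ⟨S', hS'pack, rfl⟩

theorem stmt6 (q n k t lam : ℕ) (F : Type) [Field F] [Fintype F] (hq : Fintype.card F = q)
    (ht : 2 ≤ t) (htk : t ≤ k) (hkn : k ≤ n) (hlam : 1 ≤ lam) :
    packingNumber F n k t lam ≤
      (q ^ n - 1) * packingNumber F (n - 1) (k - 1) (t - 1) lam / (q ^ k - 1) := by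
  have hq2 : 1 < q := hq ▸ Fintype.one_lt_card
  have hqk : 1 < q ^ k := Nat.one_lt_pow (by omega) hq2
  have hmem : packingNumber F n k t lam ∈
      {m | ∃ S : Finset (Submodule F (Fin n → F)), IsPacking F n k t lam S ∧ S.card = m} :=
    Nat.sSup_mem (pk_ne F n k t lam) (pk_bdd F n k t lam)
  obtain ⟨S, hS, hScard⟩ := hmem
  rw [← hScard]
  rw [Nat.le_div_iff_mul_le (by omega : 0 < q ^ k - 1)]
  set A' := packingNumber F (n-1) (k-1) (t-1) lam with hA'
  -- double counting
  have hsplit : ∀ U ∈ S, (Finset.univ.filter fun w => w ∈ U ∧ w ≠ 0).card = q ^ k - 1 := by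
    intro U hU
    have h0 : (Finset.univ.filter fun w => w ∈ U ∧ w ≠ 0)
        = (Finset.univ.filter (· ∈ U)).erase 0 := by
      ext w
      simp [Finset.mem_erase, and_comm]
    have hcardU : (Finset.univ.filter (· ∈ U)).card = q ^ k := by
      rw [← Fintype.card_subtype, ← hq, ← hS.1 U hU]
      exact card_mod F U
    rw [h0, Finset.card_erase_of_mem (by simp [Submodule.zero_mem]), hcardU]
  have key : ∑ U ∈ S, (Finset.univ.filter fun w => w ∈ U ∧ w ≠ 0).card
      = ∑ w ∈ Finset.univ.filter (fun w : Fin n → F => w ≠ 0),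
          (S.filter fun U => w ∈ U).card := by
    simp only [Finset.card_filter]
    rw [Finset.sum_comm, Finset.sum_filter]
    refine Finset.sum_congr rfl fun w _ => ?_
    by_cases hw : w = 0
    · simp [hw]
    · simp [hw]
  have lhs_eq : ∑ U ∈ S, (Finset.univ.filter fun w => w ∈ U ∧ w ≠ 0).card
      = S.card * (q ^ k - 1) := by
    rw [Finset.sum_congr rfl hsplit, Finset.sum_const, smul_eq_mul]
  have hVs : (Finset.univ.filter (fun w : Fin n → F => w ≠ 0)).card = q ^ n - 1 := by
    rw [Finset.filter_ne', Finset.card_erase_of_mem (Finset.mem_univ 0),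
      Finset.card_univ, card_mod F (Fin n → F), Module.finrank_fin_fun, hq]
  have rhs_le : ∑ w ∈ Finset.univ.filter (fun w : Fin n → F => w ≠ 0),
      (S.filter fun U => w ∈ U).card ≤ (q ^ n - 1) * A' := by
    calc ∑ w ∈ Finset.univ.filter (fun w : Fin n → F => w ≠ 0),
        (S.filter fun U => w ∈ U).card
        ≤ ∑ _w ∈ Finset.univ.filter (fun w : Fin n → F => w ≠ 0), A' := by
          refine Finset.sum_le_sum fun w hw => ?_
          rw [Finset.mem_filter] at hw
          exact point_bound n k t lam F (by omega) htk hkn S hS w hw.2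
      _ = (q ^ n - 1) * A' := by rw [Finset.sum_const, smul_eq_mul, hVs]
  omega
end

section
/- For n ≥ 3 and any prime power q, any t-(n,n-1,q)_q subspace packing with t = n-2 (allowing repeated blocks) has at most q^{n-1} blocks, i.e. A^r_q(n,n-1,n-2;q) ≤ q^{n-1}. -/
open scoped Classical

/-!
Fix a block `U₀` of multiplicity `m`. Every other block `U` meets `U₀` in a hyperplane `U ⊓ U₀`
of `U₀`, and a hyperplane of `U₀` already lies in the `m` copies of `U₀`, hence in at most `q - m`
other blocks. By duality `U₀` has as many hyperplanes as its dual has projective points, namely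
`(q ^ (n - 1) - 1) / (q - 1)`, so the number `x` of other blocks satisfies
`x (q - 1) ≤ (q ^ (n - 1) - 1) (q - m)`, and with `1 ≤ m ≤ q` this gives `m + x ≤ q ^ (n - 1)`.
-/

open Module

theorem Nat.add_le_of_mul_sub_one_le {m q x Q : ℕ} (hq : 2 ≤ q) (hm : 1 ≤ m) (hmq : m ≤ q)
    (hqQ : q ≤ Q) (hx : x * (q - 1) ≤ (Q - 1) * (q - m)) : m + x ≤ Q := by
  refine Nat.le_of_mul_le_mul_right ?_ (by omega : 0 < q - 1)
  zify [(by omega : 1 ≤ q), hmq, (by omega : 1 ≤ Q)] at hx ⊢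
  nlinarith

theorem Multiset.card_le_card_toFinset_map_mul {α β : Type*} [DecidableEq β] {s : Multiset α}
    {f : α → β} {b : ℕ} (h : ∀ y ∈ s.map f, s.countP (y = f ·) ≤ b) :
    card s ≤ (s.map f).toFinset.card * b := by
  rw [← card_map f, ← toFinset_sum_count_eq]
  exact Finset.sum_le_card_nsmul _ _ _ fun y hy => by
    rw [count_map, ← countP_eq_card_filter]; exact h y (mem_toFinset.mp hy)

section

variable {F V : Type*} [Field F] [AddCommGroup V] [Module F V]

namespace Submodule

theorem finrank_inf_add_one_of_ne [FiniteDimensional F V] {U W : Submodule F V}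
    (hU : finrank F U + 1 = finrank F V) (hW : finrank F W + 1 = finrank F V) (hUW : U ≠ W) :
    finrank F ↥(U ⊓ W) + 1 = finrank F W := by
  have hsup : U ⊔ W = ⊤ := by
    refine eq_top_of_finrank_eq (le_antisymm (finrank_le _) ?_)
    by_contra! hlt
    have hU_eq : U = U ⊔ W := eq_of_le_of_finrank_le le_sup_left (by omega)
    exact hUW (eq_of_le_of_finrank_eq (hU_eq ▸ le_sup_right) (by omega)).symm
  have := finrank_sup_add_finrank_inf_eq U W
  rw [hsup, finrank_top] at this
  omega

theorem exists_le_finrank_add_one_eq [FiniteDimensional F V] (U : Submodule F V)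
    (hU : 0 < finrank F U) : ∃ T ≤ U, finrank F T + 1 = finrank F U := by
  have : Nontrivial U := finrank_pos_iff.mp hU
  obtain ⟨f, hf⟩ := exists_ne (0 : Dual F U)
  exact ⟨(LinearMap.ker f).map U.subtype, map_subtype_le _ _,
    by rw [finrank_map_subtype_eq, Dual.finrank_ker_add_one_of_ne_zero hf]⟩

theorem card_mul_le_of_finrank_add_one_eq [Finite F] [FiniteDimensional F V]
    (U : Submodule F V) (𝒯 : Finset (Submodule F V))
    (h𝒯 : ∀ T ∈ 𝒯, T ≤ U ∧ finrank F T + 1 = finrank F U) :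
    𝒯.card * (Nat.card F - 1) ≤ Nat.card F ^ finrank F U - 1 := by
  have hline : ∀ T : 𝒯, finrank F (T.1.comap U.subtype).dualAnnihilator = 1 := fun T => by
    have := Subspace.finrank_add_finrank_dualAnnihilator_eq (T.1.comap U.subtype)
    rw [(comapSubtypeEquivOfLe (h𝒯 T.1 T.2).1).finrank_eq] at this
    have := (h𝒯 T.1 T.2).2
    omega
  let line : 𝒯 → Projectivization F (Dual F U) := fun T =>
    (Projectivization.equivSubmodule F (Dual F U)).symm ⟨_, hline T⟩
  have hinj : Function.Injective line := by
    intro T T' h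
    have h' := congrArg Subtype.val ((Projectivization.equivSubmodule F _).symm.injective h)
    rw [Subspace.dualAnnihilator_inj] at h'
    have := congrArg (map U.subtype) h'
    rw [map_comap_subtype, map_comap_subtype, inf_eq_right.2 (h𝒯 T.1 T.2).1,
      inf_eq_right.2 (h𝒯 T'.1 T'.2).1] at this
    exact Subtype.ext this
  have : Finite (Dual F U) := Module.finite_of_finite F
  rw [← Subspace.dual_finrank_eq, ← Module.natCard_eq_pow_finrank,
    Projectivization.card F (Dual F U), ← Nat.card_eq_finsetCard]
  gcongr
  exact Nat.card_le_card_of_injective line hinj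

end Submodule

theorem card_mul_le_of_forall_countP_le [Finite F] [FiniteDimensional F V] {U₀ : Submodule F V}
    (hU₀ : finrank F U₀ + 1 = finrank F V) (S : Multiset (Submodule F V))
    (hS : ∀ U ∈ S, U ≠ U₀ ∧ finrank F U + 1 = finrank F V) {b : ℕ}
    (hb : ∀ T ≤ U₀, finrank F T + 1 = finrank F U₀ → S.countP (T ≤ ·) ≤ b) :
    Multiset.card S * (Nat.card F - 1) ≤ (Nat.card F ^ finrank F U₀ - 1) * b := by
  classical
  set 𝒯 := (S.map (· ⊓ U₀)).toFinset
  have h𝒯 : ∀ T ∈ 𝒯, T ≤ U₀ ∧ finrank F T + 1 = finrank F U₀ := fun T hT => by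
    obtain ⟨U, hU, rfl⟩ := Multiset.mem_map.mp (Multiset.mem_toFinset.mp hT)
    exact ⟨inf_le_right, Submodule.finrank_inf_add_one_of_ne (hS U hU).2 hU₀ (hS U hU).1⟩
  have hS𝒯 : Multiset.card S ≤ 𝒯.card * b := by
    refine Multiset.card_le_card_toFinset_map_mul fun T hT => ?_
    obtain ⟨hTU₀, hT⟩ := h𝒯 T (Multiset.mem_toFinset.mpr hT)
    refine le_trans ?_ (hb T hTU₀ hT)
    rw [Multiset.countP_eq_card_filter, Multiset.countP_eq_card_filter]
    exact Multiset.card_le_card (Multiset.monotone_filter_right S fun U hU => hU ▸ inf_le_left)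
  calc Multiset.card S * (Nat.card F - 1) ≤ 𝒯.card * (Nat.card F - 1) * b := by
        rw [mul_right_comm]; gcongr
    _ ≤ (Nat.card F ^ finrank F U₀ - 1) * b := by
        gcongr; exact Submodule.card_mul_le_of_finrank_add_one_eq U₀ 𝒯 h𝒯

theorem card_le_pow_of_countP_le [Finite F] [FiniteDimensional F V] {d : ℕ}
    (hV : finrank F V = d + 2) (S : Multiset (Submodule F V))
    (hdim : ∀ U ∈ S, finrank F U = d + 1)
    (hpack : ∀ T : Submodule F V, finrank F T = d → S.countP (T ≤ ·) ≤ Nat.card F) :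
    Multiset.card S ≤ Nat.card F ^ (d + 1) := by
  classical
  rcases S.empty_or_exists_mem with rfl | ⟨U₀, hU₀S⟩
  · simp
  set q := Nat.card F
  set m := S.count U₀
  set S' := S.filter (· ≠ U₀)
  have hsplit : S = Multiset.replicate m U₀ + S' := by
    rw [← Multiset.filter_eq', Multiset.filter_add_not]
  have hU₀ := hdim U₀ hU₀S
  have hfiber : ∀ T ≤ U₀, finrank F T = d → m + S'.countP (T ≤ ·) ≤ q := fun T hT hTd => by
    have hall : (Multiset.replicate m U₀).countP (T ≤ ·) = m := by
      rw [Multiset.countP_eq_card.mpr fun U hU => Multiset.eq_of_mem_replicate hU ▸ hT,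
        Multiset.card_replicate]
    simpa only [hsplit, Multiset.countP_add, hall] using hpack T hTd
  have hS'dim : ∀ U ∈ S', U ≠ U₀ ∧ finrank F U + 1 = finrank F V := fun U hU => by
    obtain ⟨hUS, hUU₀⟩ := Multiset.mem_filter.mp hU
    exact ⟨hUU₀, by rw [hdim U hUS, hV]⟩
  have hS' := card_mul_le_of_forall_countP_le (by omega) S' hS'dim
    (fun T hT hTd => Nat.le_sub_of_add_le' (hfiber T hT (by omega)))
  have hq : 2 ≤ q := Finite.one_lt_card
  have hm : 1 ≤ m := Multiset.one_le_count_iff_mem.mpr hU₀S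
  have hmq : m ≤ q := by
    obtain ⟨T, hTU₀, hT⟩ := U₀.exists_le_finrank_add_one_eq (by omega)
    linarith [hfiber T hTU₀ (by omega)]
  rw [hU₀] at hS'
  rw [hsplit, Multiset.card_add, Multiset.card_replicate]
  exact Nat.add_le_of_mul_sub_one_le hq hm hmq (Nat.le_self_pow (by omega) q) hS'

end

theorem stmt8 (q n : ℕ) (F : Type) [Field F] [Fintype F] (hq : Fintype.card F = q)
    (hn : 3 ≤ n) :
    rPackingNumber F n (n - 1) (n - 2) q ≤ q ^ (n - 1) := by
  refine csSup_le' ?_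
  rintro _ ⟨S, ⟨hdim, hpack⟩, rfl⟩
  obtain ⟨d, rfl⟩ : ∃ d, n = d + 2 := ⟨n - 2, by omega⟩
  rw [← hq, ← Nat.card_eq_fintype_card] at hpack ⊢
  exact card_le_pow_of_countP_le (finrank_fin_fun F) S hdim hpack
end

section
/- For n ≥ 3 and any prime power q, A_q(n,n-1,n-2;q) = q^{n-1}: the maximum size of a collection of (n-1)-dimensional subspaces of F_q^n in which every (n-2)-dimensional subspace is covered at most q times equals q^{n-1}. -/
open scoped Classical

/-!
Hyperplanes of `V` containing a subspace `T` correspond, via `U ↦ U.dualAnnihilator`, to the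
points of the projective space of `T.dualAnnihilator`, so there are `1 + q + ⋯ + q^(c-1)` of
them, `c` being the codimension of `T`; in particular `q + 1` above a subspace of codimension 2.

Upper bound: fix `H ∈ S`. Each of the `1 + q + ⋯ + q^(n-2)` hyperplanes `T` of `H` lies in
`q + 1` hyperplanes of `V`, at most `q` of them in `S`, so some hyperplane `g T ∉ S` contains
`T`. Two distinct hyperplanes of `H` span `H`, so `g` is injective, and `S` misses at least
`1 + q + ⋯ + q^(n-2)` of the `1 + q + ⋯ + q^(n-1)` hyperplanes of `V`.

Lower bound: the hyperplanes not containing a fixed line `E` are `q^(n-1)` in number, and above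
a subspace `T` of codimension 2 they are those not containing `T ⊔ E`, at most `q` of them.
-/

open Module Finset

section

variable {F V : Type*} [Field F] [AddCommGroup V] [Module F V]

instance Submodule.finite_of_finite [Finite F] [FiniteDimensional F V] :
    Finite (Submodule F V) :=
  have := Module.finite_of_finite F (M := V)
  Finite.of_injective _ SetLike.coe_injective

def hyperplanesAbove (T : Submodule F V) : Set (Submodule F V) :=
  {U | T ≤ U ∧ finrank F U + 1 = finrank F V}

theorem hyperplanesAbove_antitone : Antitone (hyperplanesAbove (F := F) (V := V)) :=
  fun _ _ h _ hU => ⟨h.trans hU.1, hU.2⟩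

theorem ncard_setOf_le_and_finrank (W : Submodule F V) (P : ℕ → Prop) :
    {U : Submodule F V | U ≤ W ∧ P (finrank F U)}.ncard =
      {U : Submodule F W | P (finrank F U)}.ncard := by
  symm
  refine Set.ncard_congr (fun U _ => U.map W.subtype)
    (fun U hU => ⟨Submodule.map_subtype_le W U, ?_⟩)
    (fun U U' _ _ h => Submodule.map_injective_of_injective W.injective_subtype h)
    (fun U ⟨hUW, hU⟩ => ⟨U.comap W.subtype, ?_, ?_⟩)
  · rwa [Submodule.finrank_map_subtype_eq]
  · rwa [Set.mem_ofPred_eq, ← Submodule.finrank_map_subtype_eq, Submodule.map_comap_subtype,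
      inf_eq_right.mpr hUW]
  · rw [Submodule.map_comap_subtype, inf_eq_right.mpr hUW]

theorem ncard_setOf_le_and_finrank_eq_one [Finite F] (W : Submodule F V) :
    {L : Submodule F V | L ≤ W ∧ finrank F L = 1}.ncard =
      ∑ i ∈ range (finrank F W), Nat.card F ^ i := by
  rw [ncard_setOf_le_and_finrank W (· = 1), ← Nat.card_coe_set_eq, Set.coe_ofPred,
    ← Nat.card_congr (Projectivization.equivSubmodule F W),
    Projectivization.card_of_finrank F W rfl]

theorem ncard_hyperplanesAbove [Finite F] [FiniteDimensional F V] (T : Submodule F V) :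
    (hyperplanesAbove T).ncard = ∑ i ∈ range (finrank F V - finrank F T), Nat.card F ^ i := by
  have hT := Subspace.finrank_add_finrank_dualAnnihilator_eq T
  rw [show finrank F V - finrank F T = finrank F T.dualAnnihilator by omega,
    ← ncard_setOf_le_and_finrank_eq_one]
  refine Set.ncard_congr (fun U _ => U.dualAnnihilator) (fun U ⟨hTU, hU⟩ => ⟨?_, ?_⟩)
    (fun U U' _ _ h => Subspace.dualAnnihilator_inj.mp h)
    (fun L ⟨hLT, hL⟩ =>
      ⟨L.dualCoannihilator, ⟨?_, ?_⟩, Subspace.dualCoannihilator_dualAnnihilator_eq⟩)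
  · exact Subspace.dualAnnihilator_le_dualAnnihilator_iff.mpr hTU
  · have := Subspace.finrank_add_finrank_dualAnnihilator_eq U
    omega
  · rwa [← Subspace.dualAnnihilator_le_dualAnnihilator_iff,
      Subspace.dualCoannihilator_dualAnnihilator_eq]
  · have := Subspace.finrank_add_finrank_dualCoannihilator_eq L
    omega

theorem ncard_hyperplanesAbove_sdiff [Finite F] [FiniteDimensional F V] {T T' : Submodule F V}
    (h : T ≤ T') : (hyperplanesAbove T \ hyperplanesAbove T').ncard =
      ∑ i ∈ Ico (finrank F V - finrank F T') (finrank F V - finrank F T), Nat.card F ^ i := by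
  have := Submodule.finrank_mono h
  have := Submodule.finrank_le T'
  rw [Set.ncard_sdiff (hyperplanesAbove_antitone h), ncard_hyperplanesAbove,
    ncard_hyperplanesAbove, ← Finset.sum_range_add_sum_Ico _
      (show finrank F V - finrank F T' ≤ finrank F V - finrank F T by omega),
    Nat.add_sub_cancel_left]

theorem ncard_setOf_le_and_finrank_add_one [Finite F] [FiniteDimensional F V]
    (H : Submodule F V) :
    {T : Submodule F V | T ≤ H ∧ finrank F T + 1 = finrank F H}.ncard =
      ∑ i ∈ range (finrank F H), Nat.card F ^ i := by
  rw [ncard_setOf_le_and_finrank H (· + 1 = finrank F H)]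
  simpa [hyperplanesAbove] using ncard_hyperplanesAbove (⊥ : Submodule F H)

theorem sup_eq_of_finrank_add_one_eq [FiniteDimensional F V] {T T' H : Submodule F V}
    (hT : T ≤ H) (hT' : T' ≤ H) (hne : T ≠ T') (hrank : finrank F T + 1 = finrank F H)
    (hrank' : finrank F T' + 1 = finrank F H) : T ⊔ T' = H := by
  have hlt : T < T ⊔ T' := lt_of_le_of_ne le_sup_left fun h =>
    hne (Submodule.eq_of_le_of_finrank_eq (h ▸ le_sup_right) (by omega)).symm
  have := Submodule.finrank_lt_finrank_of_lt hlt
  exact Submodule.eq_of_le_of_finrank_le (sup_le hT hT') (by omega)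

def IsHyperplanePacking (lam : ℕ) (S : Finset (Submodule F V)) : Prop :=
  (∀ U ∈ S, finrank F U + 1 = finrank F V) ∧
    ∀ T : Submodule F V, finrank F T + 2 = finrank F V → #(S.filter (T ≤ ·)) ≤ lam

theorem IsHyperplanePacking.exists_notMem [Finite F] [FiniteDimensional F V]
    {S : Finset (Submodule F V)} (hS : IsHyperplanePacking (Nat.card F) S) {T : Submodule F V}
    (hT : finrank F T + 2 = finrank F V) : ∃ U ∈ hyperplanesAbove T, U ∉ S := by
  by_contra! hall
  have hle : (hyperplanesAbove T).ncard ≤ #(S.filter (T ≤ ·)) := by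
    rw [← Set.ncard_coe_finset]
    exact Set.ncard_le_ncard fun U hU => by simp [hall U hU, hU.1]
  rw [ncard_hyperplanesAbove, show finrank F V - finrank F T = 2 by omega] at hle
  have := hS.2 T hT
  simp only [Finset.sum_range_succ, Finset.sum_range_zero, pow_zero, pow_one] at hle
  omega

theorem IsHyperplanePacking.card_le [Finite F] [FiniteDimensional F V]
    {S : Finset (Submodule F V)} (hS : IsHyperplanePacking (Nat.card F) S) :
    #S ≤ Nat.card F ^ (finrank F V - 1) := by
  obtain rfl | ⟨H, hH⟩ := S.eq_empty_or_nonempty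
  · simp
  have hH_rank := hS.1 H hH
  set hyperplanesOfH := {T : Submodule F V | T ≤ H ∧ finrank F T + 1 = finrank F H}
  have hescape : ∀ T ∈ hyperplanesOfH, ∃ U ∈ hyperplanesAbove T, U ∉ S :=
    fun T hT => hS.exists_notMem (by have := hT.2; omega)
  choose! g hgT hgS using hescape
  have hinj : Set.InjOn g hyperplanesOfH := by
    intro T hT T' hT' hgg
    by_contra hne
    have hHg : H ≤ g T := sup_eq_of_finrank_add_one_eq hT.1 hT'.1 hne hT.2 hT'.2 ▸
      sup_le (hgT T hT).1 (hgg ▸ (hgT T' hT').1)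
    have hgH : H = g T := Submodule.eq_of_le_of_finrank_eq hHg (by have := (hgT T hT).2; omega)
    exact hgS T hT (hgH ▸ hH)
  have hcount := Set.ncard_le_ncard_of_injOn (t := hyperplanesAbove ⊥ \ ↑S) g
    (fun T hT => ⟨⟨bot_le, (hgT T hT).2⟩, hgS T hT⟩) hinj
  have htotal := Set.ncard_sdiff_add_ncard_of_subset (t := hyperplanesAbove ⊥)
    fun U hU => ⟨bot_le, hS.1 U hU⟩
  rw [Set.ncard_coe_finset, ncard_hyperplanesAbove, finrank_bot, Nat.sub_zero, ← hH_rank,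
    Finset.sum_range_succ] at htotal
  rw [ncard_setOf_le_and_finrank_add_one] at hcount
  rw [← hH_rank, Nat.add_sub_cancel]
  omega

theorem exists_isHyperplanePacking_card_eq [Finite F] [FiniteDimensional F V] [Nontrivial V] :
    ∃ S : Finset (Submodule F V), IsHyperplanePacking (Nat.card F) S ∧
      #S = Nat.card F ^ (finrank F V - 1) := by
  obtain ⟨v, hv⟩ := exists_ne (0 : V)
  set E := F ∙ v
  have hE : finrank F E = 1 := finrank_span_singleton hv
  set S := (Set.toFinite (hyperplanesAbove ⊥ \ hyperplanesAbove E)).toFinset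
  have hS_filter (T : Submodule F V) :
      ↑(S.filter (T ≤ ·)) = hyperplanesAbove T \ hyperplanesAbove (T ⊔ E) := by
    ext U
    simp only [hyperplanesAbove, bot_le, true_and, coe_filter, Set.Finite.mem_toFinset,
      Set.mem_sdiff, Set.mem_ofPred_eq, not_and, sup_le_iff, and_imp, S]
    tauto
  refine ⟨S, ⟨fun U hU => ((Set.Finite.mem_toFinset _).mp hU).1.2, fun T hT => ?_⟩, ?_⟩
  · rw [← Set.ncard_coe_finset, hS_filter, ncard_hyperplanesAbove_sdiff le_sup_left]
    have := Submodule.finrank_add_le_finrank_add_finrank T E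
    calc _ ≤ ∑ i ∈ Ico 1 2, Nat.card F ^ i :=
          Finset.sum_le_sum_of_subset (Finset.Ico_subset_Ico (by omega) (by omega))
      _ = Nat.card F := by simp
  · rw [← Set.ncard_coe_finset, Set.Finite.coe_toFinset, ncard_hyperplanesAbove_sdiff bot_le,
      finrank_bot, hE, Nat.sub_zero, Nat.Ico_pred_singleton Module.finrank_pos,
      Finset.sum_singleton]

end

theorem isPacking_iff_isHyperplanePacking {F : Type} [Field F] [Fintype F] {n lam : ℕ}
    (hn : 2 ≤ n) (S : Finset (Submodule F (Fin n → F))) :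
    IsPacking F n (n - 1) (n - 2) lam S ↔ IsHyperplanePacking lam S := by
  rw [IsHyperplanePacking, Module.finrank_fin_fun]
  exact and_congr (forall₂_congr fun _ _ => by omega)
    (forall_congr' fun _ => imp_congr_left (by omega))

theorem stmt9 (q n : ℕ) (F : Type) [Field F] [Fintype F] (hq : Fintype.card F = q)
    (hn : 3 ≤ n) :
    packingNumber F n (n - 1) (n - 2) q = q ^ (n - 1) := by
  have hrank : finrank F (Fin n → F) = n := Module.finrank_fin_fun F
  have hcard : Nat.card F = q := Nat.card_eq_fintype_card.trans hq
  have : Nontrivial (Fin n → F) := Module.nontrivial_of_finrank_pos (R := F) (by omega)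
  obtain ⟨S₀, hS₀, hS₀_card⟩ := exists_isHyperplanePacking_card_eq (F := F) (V := Fin n → F)
  rw [hrank, hcard] at hS₀_card
  refine IsGreatest.csSup_eq
    ⟨⟨S₀, (isPacking_iff_isHyperplanePacking (by omega) S₀).mpr (hcard ▸ hS₀), hS₀_card⟩, ?_⟩
  rintro _ ⟨S, hS, rfl⟩
  have hS' : IsHyperplanePacking (Nat.card F) S :=
    hcard ▸ (isPacking_iff_isHyperplanePacking (by omega) S).mp hS
  simpa only [hrank, hcard] using hS'.card_le
end

section
/- Let λ > 1, k > n/2, and t ≤ 2k − n. Then A^r_q(n,k,t;λ) ≤ 1 + A^r_q(k, 2k−n, t; λ−1). -/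
open scoped Classical

open Module Submodule

section Aux
variable {F : Type} [Field F]


lemma aux_exists {M : Type} [AddCommGroup M] [Module F M]
    (V : Submodule F M) (d : ℕ) (hd : d ≤ finrank F V) :
    ∃ W : Submodule F M, W ≤ V ∧ finrank F W = d := by
  obtain ⟨f, hf⟩ := exists_linearIndependent_of_le_finrank hd
  refine ⟨(Submodule.span F (Set.range f)).map V.subtype, Submodule.map_subtype_le _ _, ?_⟩
  rw [Submodule.finrank_map_subtype_eq, finrank_span_eq_card hf, Fintype.card_fin]

noncomputable instance subFin [Fintype F] (n : ℕ) : Fintype (Submodule F (Fin n → F)) :=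
  Fintype.ofInjective (fun p => (p : Set (Fin n → F))) SetLike.coe_injective

lemma countP_mono' {α : Type*} {p q : α → Prop} (h : ∀ a, p a → q a)
    (s : Multiset α) : s.countP p ≤ s.countP q := by
  classical
  rw [Multiset.countP_eq_card_filter, Multiset.countP_eq_card_filter]
  exact Multiset.card_le_card (Multiset.monotone_filter_right s fun a ha => h a ha)

lemma bdd_packing [Fintype F] (n k t lam : ℕ) (htk : t ≤ k)
    {S : Multiset (Submodule F (Fin n → F))} (hS : IsRPacking F n k t lam S) :
    Multiset.card S ≤ lam * Fintype.card (Submodule F (Fin n → F)) := by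
  classical
  set pick : Submodule F (Fin n → F) → Submodule F (Fin n → F) := fun U =>
    if h : ∃ T : Submodule F (Fin n → F), T ≤ U ∧ finrank F T = t then h.choose else ⊥ with hpick
  have hle : ∀ U, pick U ≤ U := by
    intro U
    by_cases h : ∃ T : Submodule F (Fin n → F), T ≤ U ∧ finrank F T = t
    · simpa [hpick, h] using h.choose_spec.1
    · simp [hpick, h]
  have hrank : ∀ U ∈ S, finrank F (pick U) = t := by
    intro U hU
    have h : ∃ T : Submodule F (Fin n → F), T ≤ U ∧ finrank F T = t :=
      aux_exists U t (by rw [hS.1 U hU]; exact htk)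
    rw [show pick U = h.choose by simp [hpick, h]]; exact h.choose_spec.2
  calc Multiset.card S = Multiset.card (S.map pick) := (Multiset.card_map _ _).symm
    _ = ∑ T ∈ (S.map pick).toFinset, (S.map pick).count T :=
        (Multiset.toFinset_sum_count_eq _).symm
    _ ≤ ∑ _T ∈ (S.map pick).toFinset, lam := by
        refine Finset.sum_le_sum fun T hT => ?_
        obtain ⟨U, hU, hUT⟩ := Multiset.mem_map.mp (Multiset.mem_toFinset.mp hT)
        have hTt : finrank F T = t := hUT ▸ hrank U hU
        calc (S.map pick).count T = S.countP fun U => pick U = T := by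
              rw [Multiset.count_map, Multiset.countP_eq_card_filter]
              congr 1; apply Multiset.filter_congr; intro a _; exact ⟨Eq.symm, Eq.symm⟩
          _ ≤ S.countP fun U => T ≤ U :=
              countP_mono' (fun U h => h ▸ hle U) S
          _ ≤ lam := hS.2 T hTt
    _ ≤ lam * Fintype.card (Submodule F (Fin n → F)) := by
        rw [Finset.sum_const, smul_eq_mul, mul_comm]
        exact Nat.mul_le_mul_left _ (Finset.card_le_univ _)

end Aux

set_option maxHeartbeats 1000000
set_option synthInstance.maxHeartbeats 400000

theorem stmt11 (q n k t lam : ℕ) (F : Type) [Field F] [Fintype F] (hq : Fintype.card F = q)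
    (hlam : 1 < lam) (hk : n < 2 * k) (ht : t ≤ 2 * k - n) :
    rPackingNumber F n k t lam ≤ 1 + rPackingNumber F k (2 * k - n) t (lam - 1) := by
  classical
  refine csSup_le ?_ ?_
  · exact ⟨0, 0, ⟨by simp, fun T _ => by simp⟩, rfl⟩
  rintro m ⟨S, hS, rfl⟩
  rcases eq_or_ne S 0 with rfl | hS0
  · simp
  obtain ⟨C, hC⟩ := Multiset.exists_mem_of_ne_zero hS0
  have hCk : finrank F C = k := hS.1 C hC
  set S' := S.erase C with hS'
  have hcons : C ::ₘ S' = S := Multiset.cons_erase hC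
  have htop : finrank F (Fin n → F) = n := by
    simp [Module.finrank_fintype_fun_eq_card]
  -- choice of subspaces W ≤ C ⊓ C'
  set f : Submodule F (Fin n → F) → Submodule F (Fin n → F) := fun C' =>
    if h : ∃ W : Submodule F (Fin n → F), W ≤ C ⊓ C' ∧ finrank F W = 2 * k - n
    then h.choose else ⊥ with hf
  have hfle : ∀ C', f C' ≤ C ⊓ C' := by
    intro C'
    by_cases h : ∃ W : Submodule F (Fin n → F), W ≤ C ⊓ C' ∧ finrank F W = 2 * k - n
    · rw [show f C' = h.choose from dif_pos h]; exact h.choose_spec.1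
    · rw [show f C' = ⊥ from dif_neg h]; exact bot_le
  have hfrank : ∀ C' ∈ S', finrank F (f C') = 2 * k - n := by
    intro C' hC'
    have hC'k : finrank F C' = k := hS.1 C' (Multiset.mem_of_mem_erase hC')
    have hdim : 2 * k - n ≤ finrank F (C ⊓ C' : Submodule F (Fin n → F)) := by
      have h1 := Submodule.finrank_sup_add_finrank_inf_eq C C'
      have h2 : finrank F (C ⊔ C' : Submodule F (Fin n → F)) ≤ n :=
        le_trans (Submodule.finrank_le _) (le_of_eq htop)
      omega
    have h : ∃ W : Submodule F (Fin n → F), W ≤ C ⊓ C' ∧ finrank F W = 2 * k - n :=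
      aux_exists _ _ hdim
    rw [show f C' = h.choose from dif_pos h]; exact h.choose_spec.2
  -- linear equivalence C ≃ F^k
  have hCk' : finrank F C = finrank F (Fin k → F) := by
    rw [hCk, Module.finrank_fintype_fun_eq_card, Fintype.card_fin]
  let e : C ≃ₗ[F] (Fin k → F) := LinearEquiv.ofFinrankEq _ _ hCk'
  set S'' := S'.map (fun C' =>
    Submodule.map e.toLinearMap ((f C').comap C.subtype)) with hS''
  have hfleC : ∀ C', f C' ≤ C := fun C' => (hfle C').trans inf_le_left
  have hpack : IsRPacking F k (2 * k - n) t (lam - 1) S'' := by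
    constructor
    · rintro X hX
      obtain ⟨C', hC', rfl⟩ := Multiset.mem_map.mp hX
      rw [LinearEquiv.finrank_map_eq e ((f C').comap C.subtype),
        (Submodule.comapSubtypeEquivOfLe (hfleC C')).finrank_eq]
      exact hfrank C' hC'
    · intro T hT
      set T₁ : Submodule F (Fin n → F) := (T.comap e.toLinearMap).map C.subtype with hT₁
      have hT₁C : T₁ ≤ C := Submodule.map_subtype_le _ _
      have hT₁rank : finrank F T₁ = t := by
        rw [hT₁, Submodule.finrank_map_subtype_eq,
          Submodule.comap_equiv_eq_map_symm e T,
          LinearEquiv.finrank_map_eq e.symm T, hT]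
      have key : ∀ C',
          T ≤ Submodule.map e.toLinearMap ((f C').comap C.subtype) → T₁ ≤ C' := by
        intro C' hle
        have h1 : T.comap e.toLinearMap ≤ (f C').comap C.subtype := by
          have h2 := Submodule.comap_mono (f := e.toLinearMap) hle
          have hinj : Function.Injective e.toLinearMap := e.injective
          rwa [Submodule.comap_map_eq_of_injective hinj] at h2
        have h2 : T₁ ≤ ((f C').comap C.subtype).map C.subtype :=
          Submodule.map_mono h1
        rw [Submodule.map_comap_subtype] at h2
        exact h2.trans (inf_le_right.trans ((hfle C').trans inf_le_right))
      have hcount : (S''.countP fun U => T ≤ U) ≤ S'.countP fun C' => T₁ ≤ C' := by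
        rw [hS'', Multiset.countP_map, ← Multiset.countP_eq_card_filter]
        exact countP_mono' (fun C' h => key C' h) S'
      have hbound : (S'.countP fun C' => T₁ ≤ C') + 1 ≤ lam := by
        have hb := hS.2 T₁ hT₁rank
        rw [← hcons, Multiset.countP_cons_of_pos _ hT₁C] at hb
        exact hb
      omega
  have hcard : Multiset.card S = 1 + Multiset.card S'' := by
    rw [hS'', Multiset.card_map, ← hcons, Multiset.card_cons]; omega
  rw [hcard]
  have hmem : Multiset.card S'' ∈
      {m | ∃ S : Multiset (Submodule F (Fin k → F)),
        IsRPacking F k (2 * k - n) t (lam - 1) S ∧ Multiset.card S = m} :=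
    ⟨S'', hpack, rfl⟩
  have hbdd : BddAbove {m | ∃ S : Multiset (Submodule F (Fin k → F)),
      IsRPacking F k (2 * k - n) t (lam - 1) S ∧ Multiset.card S = m} := by
    refine ⟨(lam - 1) * Fintype.card (Submodule F (Fin k → F)), ?_⟩
    rintro m ⟨S, hS, rfl⟩
    exact bdd_packing _ _ _ _ ht hS
  exact Nat.add_le_add_left (le_csSup hbdd hmem) 1
end

section
/- Let (a_i)_{i≥0} be non-negative reals and let μ_0, μ_1, μ_2, c be reals and m a positive integer such that Σ_i a_i = μ_0, Σ_i i·a_i = μ_1·c, Σ_i i(i−1)·a_i ≤ μ_2·c, and 2m·μ_1 > μ_2. Then c ≤ m(m+1)·μ_0 / (2m·μ_1 − μ_2). -/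
open scoped Classical

theorem stmt12 (a : ℕ → ℝ) (ha : ∀ i, 0 ≤ a i) (hfin : (Function.support a).Finite)
    (μ0 μ1 μ2 c : ℝ) (m : ℕ) (hm : 1 ≤ m)
    (h0 : ∑ᶠ i, a i = μ0)
    (h1 : ∑ᶠ (i : ℕ), (i : ℝ) * a i = μ1 * c)
    (h2 : ∑ᶠ (i : ℕ), (i : ℝ) * ((i : ℝ) - 1) * a i ≤ μ2 * c)
    (hmu : 2 * (m : ℝ) * μ1 > μ2) :
    c ≤ (m : ℝ) * ((m : ℝ) + 1) * μ0 / (2 * (m : ℝ) * μ1 - μ2) := by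
  classical
  set s := hfin.toFinset with hs
  have hsub : Function.support a ⊆ (s : Set ℕ) := by simp [hs]
  have conv : ∀ f : ℕ → ℝ, ∑ᶠ i, f i * a i = ∑ i ∈ s, f i * a i := by
    intro f
    apply finsum_eq_finset_sum_of_support_subset
    intro x hx
    have : a x ≠ 0 := by
      intro h; apply hx; simp [h]
    exact hsub this
  have e0 : ∑ i ∈ s, a i = μ0 := by
    rw [← h0]
    exact (finsum_eq_finset_sum_of_support_subset a hsub).symm
  have e1 : ∑ i ∈ s, (i : ℝ) * a i = μ1 * c := by rw [← h1, conv]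
  have e2 : ∑ i ∈ s, (i : ℝ) * ((i : ℝ) - 1) * a i ≤ μ2 * c := by
    rw [← conv (fun i => (i : ℝ) * ((i : ℝ) - 1))]; exact h2
  have key : 0 ≤ ∑ i ∈ s, ((i : ℝ) - m) * ((i : ℝ) - m - 1) * a i := by
    apply Finset.sum_nonneg
    intro i _
    have hi : 0 ≤ ((i : ℝ) - m) * ((i : ℝ) - m - 1) := by
      rcases le_or_gt i m with h | h
      · have h1' : (i : ℝ) ≤ m := by exact_mod_cast h
        nlinarith
      · have h1' : (m : ℝ) + 1 ≤ i := by exact_mod_cast h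
        apply mul_nonneg <;> linarith
    exact mul_nonneg hi (ha i)
  have expand : ∑ i ∈ s, ((i : ℝ) - m) * ((i : ℝ) - m - 1) * a i
      = (∑ i ∈ s, (i : ℝ) * ((i : ℝ) - 1) * a i)
        - 2 * m * (∑ i ∈ s, (i : ℝ) * a i)
        + m * (m + 1) * (∑ i ∈ s, a i) := by
    rw [Finset.mul_sum, Finset.mul_sum, ← Finset.sum_sub_distrib, ← Finset.sum_add_distrib]
    apply Finset.sum_congr rfl
    intro i _
    ring
  have hpos : 0 < 2 * (m : ℝ) * μ1 - μ2 := by linarith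
  rw [le_div_iff₀ hpos]
  rw [expand, e0, e1] at key
  nlinarith
end

section
/- Let U and V be k-dimensional subspaces of F_q^n given as row spaces of lifted matrices, U = rowspace(I_k | M_1) and V = rowspace(I_k | M_2) where M_1, M_2 are k×(n−k) matrices over F_q. Then the subspace distance satisfies d_S(U,V) = 2·rank(M_1 − M_2). -/
open scoped Classical

/-!
Write `A_M` for the lifted matrix `(I | M)`. Its rows are independent, so `U` and `V` have
dimension `k`. Row by row, `A_{M₂} = A_{M₁} - (0 | M₁ - M₂)`, hence `U + V` is the sum of `U` and
the row space `W` of `(0 | M₁ - M₂)`. A vector of `U` is determined by its first `k` coordinates,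
which vanish on `W`, so the sum is direct and `dim (U + V) = k + rank (M₁ - M₂)`.
-/

open Module Submodule

namespace Matrix

variable {R ι ι' κ : Type*}

theorem rank_fromCols_one_left [CommRing R] [StrongRankCondition R] [Fintype ι] [Fintype κ]
    [DecidableEq ι] (M : Matrix ι κ R) :
    (fromCols (1 : Matrix ι ι R) M).rank = Fintype.card ι := by
  have hsurj : Function.Surjective (fromCols (1 : Matrix ι ι R) M).mulVecLin := fun w =>
    ⟨Sum.elim w 0, by simp⟩
  rw [rank, LinearMap.range_eq_top.mpr hsurj, finrank_top, finrank_fintype_fun_eq_card]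

theorem rank_fromCols_zero_left [CommRing R] [Fintype ι'] [Fintype κ] (N : Matrix ι κ R) :
    (fromCols (0 : Matrix ι ι' R) N).rank = N.rank := by
  have hcomp : (fromCols (0 : Matrix ι ι' R) N).mulVecLin =
      N.mulVecLin ∘ₗ LinearMap.funLeft R R Sum.inr := by
    refine LinearMap.ext fun v => ?_
    simp [LinearMap.funLeft]
  have hsurj :=
    LinearMap.funLeft_surjective_of_injective R R _ (Sum.inr_injective (α := ι') (β := κ))
  rw [rank, rank, hcomp, LinearMap.range_comp_of_range_eq_top _ (LinearMap.range_eq_top.mpr hsurj)]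

theorem disjoint_span_fromCols_one_zero [Field R] [Fintype ι] [DecidableEq ι] [Fintype ι']
    (M : Matrix ι κ R) (N : Matrix ι' κ R) :
    Disjoint (span R (Set.range (fromCols (1 : Matrix ι ι R) M).row))
      (span R (Set.range (fromCols (0 : Matrix ι' ι R) N).row)) := by
  rw [disjoint_iff_inf_le]
  rintro v ⟨hvU, hvW⟩
  rw [← range_vecMulLinear] at hvU hvW
  obtain ⟨x, rfl⟩ := hvU
  obtain ⟨y, hy⟩ := hvW
  have hx : x = 0 := by
    funext i
    simpa using (congrFun hy (Sum.inl i)).symm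
  simp [hx]

end Matrix

theorem Submodule.sup_span_range_sub {R M ι : Type*} [Ring R] [AddCommGroup M] [Module R M]
    (a c : ι → M) :
    span R (Set.range a) ⊔ span R (Set.range (a - c)) =
      span R (Set.range a) ⊔ span R (Set.range c) := by
  have hle : ∀ b d : ι → M, (∀ i, d i = a i - b i) →
      span R (Set.range a) ⊔ span R (Set.range d) ≤
        span R (Set.range a) ⊔ span R (Set.range b) := by
    intro b d hd
    refine sup_le le_sup_left (span_le.mpr (Set.range_subset_iff.mpr fun i => ?_))
    rw [hd]
    exact sub_mem (mem_sup_left (subset_span ⟨i, rfl⟩))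
      (mem_sup_right (subset_span ⟨i, rfl⟩))
  exact le_antisymm (hle c _ fun _ => rfl) (hle (a - c) c fun i => by simp)

theorem stmt15_general (k m : ℕ) (F : Type) [Field F]
    (M₁ M₂ : Matrix (Fin k) (Fin m) F)
    (U V : Submodule F (Fin k ⊕ Fin m → F))
    (hU : U = Submodule.span F (Set.range fun i => Matrix.fromCols (1 : Matrix (Fin k) (Fin k) F) M₁ i))
    (hV : V = Submodule.span F (Set.range fun i => Matrix.fromCols (1 : Matrix (Fin k) (Fin k) F) M₂ i)) :
    2 * Module.finrank F (U ⊔ V : Submodule F (Fin k ⊕ Fin m → F)) -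
        Module.finrank F U - Module.finrank F V = 2 * (M₁ - M₂).rank := by
  replace hU : U = span F (Set.range (Matrix.fromCols 1 M₁).row) := hU
  replace hV : V = span F (Set.range (Matrix.fromCols 1 M₂).row) := hV
  set W := span F (Set.range (Matrix.fromCols (0 : Matrix (Fin k) (Fin k) F) (M₁ - M₂)).row)
  have hrows : Matrix.fromCols (1 : Matrix (Fin k) (Fin k) F) M₂ =
      Matrix.fromCols 1 M₁ - Matrix.fromCols 0 (M₁ - M₂) := by
    ext i (j | j) <;> simp
  have hUV : U ⊔ V = U ⊔ W := by
    rw [hU, hV, hrows]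
    exact sup_span_range_sub _ _
  have hdisj : Disjoint U W := hU ▸ Matrix.disjoint_span_fromCols_one_zero M₁ (M₁ - M₂)
  have hsum : finrank F ↥(U ⊔ V) = finrank F U + finrank F W := by
    have := finrank_sup_add_finrank_inf_eq U W
    rwa [hdisj.eq_bot, finrank_bot, add_zero, ← hUV] at this
  have hdim (M : Matrix (Fin k) (Fin m) F) :
      finrank F (span F (Set.range (Matrix.fromCols (1 : Matrix (Fin k) (Fin k) F) M).row)) =
        k := by
    rw [← Matrix.rank_eq_finrank_span_row, Matrix.rank_fromCols_one_left, Fintype.card_fin]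
  have hdimW : finrank F W = (M₁ - M₂).rank := by
    rw [← Matrix.rank_eq_finrank_span_row, Matrix.rank_fromCols_zero_left]
  rw [hsum, hdimW, hU, hV, hdim, hdim]
  omega

theorem stmt15 (q k m : ℕ) (F : Type) [Field F] [Fintype F] (hq : Fintype.card F = q)
    (M₁ M₂ : Matrix (Fin k) (Fin m) F)
    (U V : Submodule F (Fin k ⊕ Fin m → F))
    (hU : U = Submodule.span F (Set.range fun i => Matrix.fromCols (1 : Matrix (Fin k) (Fin k) F) M₁ i))
    (hV : V = Submodule.span F (Set.range fun i => Matrix.fromCols (1 : Matrix (Fin k) (Fin k) F) M₂ i)) :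
    2 * Module.finrank F (U ⊔ V : Submodule F (Fin k ⊕ Fin m → F)) -
        Module.finrank F U - Module.finrank F V = 2 * (M₁ - M₂).rank :=
  stmt15_general k m F M₁ M₂ U V hU hV
end

section
/- Let λ, n, k, t be positive integers with 1 ≤ t ≤ k ≤ n, λ ≤ [n−t choose k−t]_q, and (λ+1)k − λn ≥ t. Then A_q(n,k,t;λ) = λ. -/
open scoped Classical

/-!
Upper bound: by `dim (U ⊓ W) = dim U + dim W - dim (U ⊔ W)`, any `λ + 1` subspaces of dimension
`k` of `F^n` meet in dimension at least `(λ + 1) k - λ n ≥ t`, so a `t`-subspace of that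
intersection would lie in `λ + 1` members of the packing.
Lower bound: any `λ` distinct `k`-subspaces form a packing, and the hypotheses give
`λ ≤ n.choose k` (for `k < n`, `λ ≤ λ (n - k) ≤ k - t`; for `k = n`, `λ ≤ [n - t, n - t]_q = 1`),
so `λ` coordinate subspaces will do.
-/

lemma gaussBinom_eq_zero_of_lt (q : ℕ) : ∀ {n k : ℕ}, n < k → gaussBinom q n k = 0
  | 0, _ + 1, _ => rfl
  | n + 1, k + 1, h => by
    rw [gaussBinom, gaussBinom_eq_zero_of_lt q (by omega : n < k),
      gaussBinom_eq_zero_of_lt q (by omega : n < k + 1), mul_zero, add_zero]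

lemma gaussBinom_self (q : ℕ) : ∀ n, gaussBinom q n n = 1
  | 0 => rfl
  | n + 1 => by
    rw [gaussBinom, gaussBinom_self q n, gaussBinom_eq_zero_of_lt q n.lt_succ_self, mul_zero,
      add_zero]

lemma le_choose_of_mul_le {lam n k : ℕ} (hkn : k < n) (h : lam * n ≤ (lam + 1) * k) :
    lam ≤ n.choose k := by
  rw [add_mul, one_mul] at h
  calc lam ≤ lam * (n - k) := Nat.le_mul_of_pos_right lam (by omega)
    _ = lam * n - lam * k := Nat.mul_sub lam n k
    _ ≤ k := by omega
    _ ≤ (k + 1).choose k := by rw [Nat.choose_succ_self_right]; omega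
    _ ≤ n.choose k := Nat.choose_le_choose k hkn

open Module

namespace Submodule

variable {F V : Type*} [Field F] [AddCommGroup V] [Module F V]

lemma exists_le_finrank_eq (W : Submodule F V) {t : ℕ}
    (h : t ≤ finrank F W) : ∃ T ≤ W, finrank F T = t := by
  obtain ⟨f, hf⟩ := exists_linearIndependent_of_le_finrank h
  refine ⟨(span F (Set.range f)).map W.subtype, map_subtype_le _ _, ?_⟩
  rw [finrank_map_subtype_eq, finrank_span_eq_card hf, Fintype.card_fin]

lemma sum_finrank_add_finrank_le_finrank_inf [FiniteDimensional F V] {ι : Type*}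
    (s : Finset ι) (f : ι → Submodule F V) :
    ∑ i ∈ s, finrank F (f i) + finrank F V ≤ finrank F ↥(s.inf f) + s.card * finrank F V := by
  classical
  induction s using Finset.induction with
  | empty => rw [Finset.inf_empty, finrank_top]; simp
  | @insert i s hi ih =>
    have hsup_inf := finrank_sup_add_finrank_inf_eq (f i) (s.inf f)
    have hsup_le : finrank F ↥(f i ⊔ s.inf f) ≤ finrank F V := finrank_le _
    rw [Finset.sum_insert hi, Finset.inf_insert, Finset.card_insert_of_notMem hi, add_mul]
    omega

end Submodule

namespace Module.Basis

variable {ι F V : Type*} [Field F] [AddCommGroup V] [Module F V] (b : Basis ι F V)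

lemma finrank_span_image_finset (s : Finset ι) :
    finrank F (Submodule.span F (b '' s)) = s.card := by
  have hli := b.linearIndependent.comp _ (Subtype.coe_injective (p := (· ∈ (s : Set ι))))
  rw [Set.image_eq_range]
  exact (finrank_span_eq_card hli).trans (by simp)

lemma span_image_injective : Function.Injective fun s : Set ι => Submodule.span F (b '' s) := by
  intro s s' h
  ext i
  rw [← b.self_mem_span_image (R := F), ← b.self_mem_span_image (R := F) (s := s')]
  exact SetLike.ext_iff.mp h _

end Module.Basis

lemma exists_finset_submodule_finrank_eq_of_le_choose {F V : Type*} [Field F] [AddCommGroup V]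
    [Module F V] [FiniteDimensional F V] {m k : ℕ} (hm : m ≤ (finrank F V).choose k) :
    ∃ S : Finset (Submodule F V), S.card = m ∧ ∀ U ∈ S, finrank F U = k := by
  classical
  let b := finBasis F V
  have hinj : Function.Injective fun s : Finset (Fin (finrank F V)) => Submodule.span F (b '' s) :=
    b.span_image_injective.comp Finset.coe_injective
  have hcard : ((Finset.univ.powersetCard k).image fun s : Finset (Fin (finrank F V)) =>
      Submodule.span F (b '' s)).card =
      (finrank F V).choose k := by
    rw [Finset.card_image_of_injective _ hinj, Finset.card_powersetCard, Finset.card_univ,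
      Fintype.card_fin]
  obtain ⟨S, hS, hSm⟩ := Finset.exists_subset_card_eq (hcard ▸ hm)
  refine ⟨S, hSm, fun U hU => ?_⟩
  obtain ⟨s, hs, rfl⟩ := Finset.mem_image.mp (hS hU)
  rw [b.finrank_span_image_finset, (Finset.mem_powersetCard.mp hs).2]

section Packing

variable {F : Type} [Field F] [Fintype F] {n k t lam : ℕ}

lemma isPacking_of_card_le {S : Finset (Submodule F (Fin n → F))}
    (hk : ∀ U ∈ S, finrank F U = k) (hS : S.card ≤ lam) : IsPacking F n k t lam S :=
  ⟨hk, fun _ _ => (Finset.card_filter_le _ _).trans hS⟩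

lemma IsPacking.card_le {S : Finset (Submodule F (Fin n → F))} (hS : IsPacking F n k t lam S)
    (hdim : lam * n + t ≤ (lam + 1) * k) : S.card ≤ lam := by
  by_contra! hlt
  obtain ⟨S', hS'S, hS'card⟩ := S.exists_subset_card_eq (n := lam + 1) hlt
  have hsum : ∑ U ∈ S', finrank F U = (lam + 1) * k := by
    rw [Finset.sum_congr rfl fun U hU => hS.1 U (hS'S hU), Finset.sum_const, hS'card, smul_eq_mul]
  have hinf := Submodule.sum_finrank_add_finrank_le_finrank_inf S' id
  simp only [id_eq] at hinf
  rw [hsum, hS'card, finrank_fin_fun] at hinf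
  obtain ⟨T, hT, hTt⟩ := (S'.inf id).exists_le_finrank_eq (t := t) (by linarith)
  have hS'_le : S' ⊆ S.filter fun U => T ≤ U := fun U hU =>
    Finset.mem_filter.mpr ⟨hS'S hU, hT.trans (Finset.inf_le hU)⟩
  have := (Finset.card_le_card hS'_le).trans (hS.2 T hTt)
  omega

end Packing

theorem stmt18_general (q n k t lam : ℕ) (F : Type) [Field F] [Fintype F]
    (ht : 1 ≤ t) (hkn : k ≤ n)
    (hlam2 : lam ≤ gaussBinom q (n - t) (k - t))
    (hdim : (lam + 1) * k - lam * n ≥ t) :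
    packingNumber F n k t lam = lam := by
  -- `hdim` is a truncated subtraction, meaningful because `t ≥ 1`
  have hdim' : lam * n + t ≤ (lam + 1) * k := by omega
  have hchoose : lam ≤ n.choose k := by
    rcases hkn.eq_or_lt with rfl | hkn
    · rwa [Nat.choose_self, ← gaussBinom_self q (k - t)]
    · exact le_choose_of_mul_le hkn (by omega)
  obtain ⟨S, hScard, hSk⟩ := exists_finset_submodule_finrank_eq_of_le_choose (F := F)
    (V := Fin n → F) (m := lam) (k := k) (by rwa [finrank_fin_fun])
  refine IsGreatest.csSup_eq ⟨⟨S, isPacking_of_card_le hSk hScard.le, hScard⟩, ?_⟩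
  rintro _ ⟨S', hS', rfl⟩
  exact hS'.card_le hdim'

theorem stmt18 (q n k t lam : ℕ) (F : Type) [Field F] [Fintype F] (hq : Fintype.card F = q)
    (hlam : 1 ≤ lam) (ht : 1 ≤ t) (htk : t ≤ k) (hkn : k ≤ n)
    (hlam2 : lam ≤ gaussBinom q (n - t) (k - t))
    (hdim : (lam + 1) * k - lam * n ≥ t) :
    packingNumber F n k t lam = lam :=
  stmt18_general q n k t lam F ht hkn hlam2 hdim
end
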